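/- Let ω(t) = t, and suppose φ is an analytic self-map of 𝔻 such that for some r ∈ (0, 2√3/9) and ε > 0, for each w ∈ 𝔻 there is z_w ∈ 𝔻 with ρ(φ(z_w), w) < r and (1-|z_w|²)|φ'(z_w)|/(1-|φ(z_w)|²) > ε. Then for every harmonic Bloch mapping f on 𝔻, ‖f∘φ‖_s ≥ (1 - (3√3/2)r)·ε·‖f‖_s, where ‖·‖_s denotes the harmonic Bloch semi-norm sup_{z∈𝔻}(1-|z|²)Λ_f(z). -/

import Mathlib

/-!
Write `B(z) = (1 - |z|²)(|h'(z)| + |g'(z)|)` and `S = sup B`. For `p, w` in the disk, choose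
unimodular `c₁, c₂` aligning `h'(w), g'(w)` and pull `c₁ h' + c₂ g'` back along the disk automorphism
sending `0 ↦ p` and `u ↦ w`, `|u| = ρ(p, w)`; the result `K` is analytic with
`(1 - |ξ|²)|K(ξ)| ≤ S`. Schwarz–Pick applied to `K(sξ)(1 - s²)/S` gives
`B(w) ≤ |K(u)| ≤ |K(0)| + S ρ(p, w) / (s(1 - s²)) ≤ B(p) + (3√3/2) S ρ(p, w)` for `s = 1/√3`.
Taking `p = φ(z_w)`, the chain rule gives `ε B(p) ≤ B_{f∘φ}(z_w) ≤ T = sup B_{f∘φ}`, hence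
`ε B(w) ≤ T + (3√3/2) r ε S` for every `w`, and the supremum over `w` is the claim.
-/

open Metric Set Complex ComplexConjugate

/-- `‖mobius a z‖` is the pseudo-hyperbolic distance `ρ(a, z)`. -/
noncomputable def mobius (a z : ℂ) : ℂ := (a - z) / (1 - conj a * z)

/-- The derivative of `mobius a`. -/
noncomputable def mobiusDeriv (a z : ℂ) : ℂ := ((‖a‖ : ℂ) ^ 2 - 1) / (1 - conj a * z) ^ 2

section Mobius

variable {a z : ℂ}

lemma mobius_zero (a : ℂ) : mobius a 0 = a := by simp [mobius]

lemma mobius_self (a : ℂ) : mobius a a = 0 := by simp [mobius]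

lemma norm_mobius_comm (a z : ℂ) : ‖mobius a z‖ = ‖mobius z a‖ := by
  rw [mobius, mobius, norm_div, norm_div, norm_sub_rev a, ← norm_conj (1 - conj a * z)]
  simp [mul_comm]

lemma sq_norm_one_sub_conj_mul_sub_sq_norm_sub (a z : ℂ) :
    ‖1 - conj a * z‖ ^ 2 - ‖a - z‖ ^ 2 = (1 - ‖a‖ ^ 2) * (1 - ‖z‖ ^ 2) := by
  simp only [Complex.sq_norm, normSq_apply, sub_re, sub_im, mul_re, mul_im, conj_re, conj_im, one_re,
    one_im]
  ring

lemma one_sub_sq_norm_pos (hz : ‖z‖ < 1) : 0 < 1 - ‖z‖ ^ 2 :=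
  sub_pos.2 (pow_lt_one₀ (norm_nonneg z) hz two_ne_zero)

lemma one_sub_conj_mul_ne_zero (ha : ‖a‖ < 1) (hz : ‖z‖ < 1) : 1 - conj a * z ≠ 0 := by
  have : ‖conj a * z‖ < 1 := by
    rw [norm_mul, norm_conj]
    exact mul_lt_one_of_nonneg_of_lt_one_left (norm_nonneg a) ha hz.le
  intro h
  rw [← sub_eq_zero.1 h, norm_one] at this
  exact this.false

lemma one_sub_sq_norm_mobius (ha : ‖a‖ < 1) (hz : ‖z‖ < 1) :
    1 - ‖mobius a z‖ ^ 2 = (1 - ‖a‖ ^ 2) * (1 - ‖z‖ ^ 2) / ‖1 - conj a * z‖ ^ 2 := by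
  have hd : ‖1 - conj a * z‖ ≠ 0 := norm_ne_zero_iff.2 (one_sub_conj_mul_ne_zero ha hz)
  rw [← sq_norm_one_sub_conj_mul_sub_sq_norm_sub, mobius, norm_div, div_pow, sub_div,
    div_self (pow_ne_zero 2 hd)]

lemma norm_mobius_lt_one (ha : ‖a‖ < 1) (hz : ‖z‖ < 1) : ‖mobius a z‖ < 1 := by
  have h := one_sub_sq_norm_mobius ha hz
  have : 0 < (1 - ‖a‖ ^ 2) * (1 - ‖z‖ ^ 2) / ‖1 - conj a * z‖ ^ 2 :=
    div_pos (mul_pos (one_sub_sq_norm_pos ha) (one_sub_sq_norm_pos hz))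
      (pow_pos (norm_pos_iff.2 (one_sub_conj_mul_ne_zero ha hz)) 2)
  nlinarith [norm_nonneg (mobius a z)]

lemma mapsTo_mobius (ha : ‖a‖ < 1) : MapsTo (mobius a) (ball 0 1) (ball 0 1) := by
  intro z hz
  rw [mem_ball_zero_iff] at hz ⊢
  exact norm_mobius_lt_one ha hz

lemma differentiableOn_mobius (ha : ‖a‖ < 1) : DifferentiableOn ℂ (mobius a) (ball 0 1) := by
  intro z hz
  rw [mem_ball_zero_iff] at hz
  have hd := one_sub_conj_mul_ne_zero ha hz
  unfold mobius
  fun_prop (disch := assumption)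

lemma differentiableOn_mobiusDeriv (ha : ‖a‖ < 1) :
    DifferentiableOn ℂ (mobiusDeriv a) (ball 0 1) := by
  intro z hz
  rw [mem_ball_zero_iff] at hz
  have hd := pow_ne_zero 2 (one_sub_conj_mul_ne_zero ha hz)
  unfold mobiusDeriv
  fun_prop (disch := assumption)

lemma mobius_mobius (ha : ‖a‖ < 1) (hz : ‖z‖ < 1) : mobius a (mobius a z) = z := by
  have hq : mobius a z * (1 - conj a * z) = a - z :=
    div_mul_cancel₀ _ (one_sub_conj_mul_ne_zero ha hz)
  have hd := one_sub_conj_mul_ne_zero ha (norm_mobius_lt_one ha hz)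
  rw [mobius, div_eq_iff hd]
  linear_combination -hq

lemma norm_mobiusDeriv_mul (ha : ‖a‖ < 1) (hz : ‖z‖ < 1) :
    ‖mobiusDeriv a z‖ * (1 - ‖z‖ ^ 2) = 1 - ‖mobius a z‖ ^ 2 := by
  have hnum : ‖(‖a‖ : ℂ) ^ 2 - 1‖ = 1 - ‖a‖ ^ 2 := by
    rw [← ofReal_pow, ← ofReal_one, ← ofReal_sub, norm_real, Real.norm_eq_abs,
      abs_of_nonpos (by nlinarith [norm_nonneg a])]
    ring
  rw [one_sub_sq_norm_mobius ha hz, mobiusDeriv, norm_div, norm_pow, hnum]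
  ring

lemma norm_mobius_le_norm_add_norm (ha : ‖a‖ < 1) (hz : ‖z‖ < 1) :
    ‖mobius a z‖ ≤ ‖a‖ + ‖z‖ := by
  have hd : 0 < ‖1 - conj a * z‖ := norm_pos_iff.2 (one_sub_conj_mul_ne_zero ha hz)
  have hd' : ‖1 - conj a * z‖ ≤ 1 + ‖a‖ * ‖z‖ := by
    simpa using norm_sub_le (1 : ℂ) (conj a * z)
  have hP : 0 ≤ (1 - ‖a‖ ^ 2) * (1 - ‖z‖ ^ 2) :=
    (mul_pos (one_sub_sq_norm_pos ha) (one_sub_sq_norm_pos hz)).le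
  have hsq : ‖mobius a z‖ ^ 2 ≤ (‖a‖ + ‖z‖) ^ 2 :=
    calc ‖mobius a z‖ ^ 2 = 1 - (1 - ‖a‖ ^ 2) * (1 - ‖z‖ ^ 2) / ‖1 - conj a * z‖ ^ 2 := by
          rw [← one_sub_sq_norm_mobius ha hz]; ring
      _ ≤ 1 - (1 - ‖a‖ ^ 2) * (1 - ‖z‖ ^ 2) / (1 + ‖a‖ * ‖z‖) ^ 2 := by
          gcongr
      _ = (‖a‖ + ‖z‖) ^ 2 / (1 + ‖a‖ * ‖z‖) ^ 2 := by
          field_simp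
          ring
      _ ≤ (‖a‖ + ‖z‖) ^ 2 := by
          apply div_le_self (by positivity)
          nlinarith [mul_nonneg (norm_nonneg a) (norm_nonneg z)]
  exact (pow_le_pow_iff_left₀ (norm_nonneg _) (by positivity) two_ne_zero).1 hsq

lemma norm_le_norm_add_norm_mobius (ha : ‖a‖ < 1) (hz : ‖z‖ < 1) :
    ‖z‖ ≤ ‖a‖ + ‖mobius a z‖ := by
  conv_lhs => rw [← mobius_mobius ha hz]
  exact norm_mobius_le_norm_add_norm ha (norm_mobius_lt_one ha hz)

end Mobius

lemma norm_le_norm_apply_zero_add_norm {ψ : ℂ → ℂ} {z : ℂ}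
    (hd : DifferentiableOn ℂ ψ (ball 0 1)) (hm : MapsTo ψ (ball 0 1) (ball 0 1)) (hz : ‖z‖ < 1) :
    ‖ψ z‖ ≤ ‖ψ 0‖ + ‖z‖ := by
  have hb : ‖ψ 0‖ < 1 := mem_ball_zero_iff.1 (hm (mem_ball_self one_pos))
  have hψz : ‖ψ z‖ < 1 := mem_ball_zero_iff.1 (hm (mem_ball_zero_iff.2 hz))
  have hschwarz : ‖mobius (ψ 0) (ψ z)‖ ≤ ‖z‖ :=
    norm_le_norm_of_mapsTo_ball (f := mobius (ψ 0) ∘ ψ) ((differentiableOn_mobius hb).comp hd hm)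
      (((mapsTo_mobius hb).comp hm).mono_right ball_subset_closedBall) (mobius_self _) hz
  linarith [norm_le_norm_add_norm_mobius hb hψz]

lemma norm_le_norm_apply_zero_add_of_norm_mul_one_sub_sq_le {K : ℂ → ℂ} {S s : ℝ} {u : ℂ}
    (hK : DifferentiableOn ℂ K (ball 0 1))
    (hKS : ∀ z ∈ ball (0 : ℂ) 1, ‖K z‖ * (1 - ‖z‖ ^ 2) ≤ S)
    (hs₀ : 0 < s) (hs₁ : s < 1) (hu : ‖u‖ < s) :
    ‖K u‖ ≤ ‖K 0‖ + S / (s * (1 - s ^ 2)) * ‖u‖ := by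
  have hs : 0 < 1 - s ^ 2 := sub_pos.2 (pow_lt_one₀ hs₀.le hs₁ two_ne_zero)
  have hu₁ : ‖u‖ < 1 := hu.trans hs₁
  have hS : 0 ≤ S := (norm_nonneg _).trans (by simpa using hKS 0 (mem_ball_self one_pos))
  rcases hS.eq_or_lt with rfl | hS
  · have := hKS u (mem_ball_zero_iff.2 hu₁)
    have : ‖K u‖ ≤ 0 := nonpos_of_mul_nonpos_left this (one_sub_sq_norm_pos hu₁)
    rw [zero_div, zero_mul, add_zero]
    exact this.trans (norm_nonneg _)
  set M := S / (1 - s ^ 2)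
  have hM : 0 < M := div_pos hS hs
  have hKM : ∀ ζ : ℂ, ‖ζ‖ < s → ‖K ζ‖ < M := fun ζ hζ ↦ by
    have hζ₁ := hζ.trans hs₁
    calc ‖K ζ‖ ≤ S / (1 - ‖ζ‖ ^ 2) :=
          (le_div_iff₀ (one_sub_sq_norm_pos hζ₁)).2 (hKS ζ (mem_ball_zero_iff.2 hζ₁))
      _ < M := div_lt_div_of_pos_left hS hs (by nlinarith [norm_nonneg ζ])
  have hscale : ∀ ξ : ℂ, ‖(s : ℂ) * ξ‖ = s * ‖ξ‖ := fun ξ ↦ by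
    rw [norm_mul, norm_real, Real.norm_of_nonneg hs₀.le]
  let ψ : ℂ → ℂ := fun ξ ↦ K (s * ξ) / M
  have hψm : MapsTo ψ (ball 0 1) (ball 0 1) := fun ξ hξ ↦ by
    rw [mem_ball_zero_iff] at hξ ⊢
    rw [norm_div, norm_real, Real.norm_of_nonneg hM.le, div_lt_one hM]
    exact hKM _ (by rw [hscale]; exact mul_lt_of_lt_one_right hs₀ hξ)
  have hψd : DifferentiableOn ℂ ψ (ball 0 1) := by
    refine (hK.comp (by fun_prop) fun ξ hξ ↦ ?_).div_const _
    rw [mem_ball_zero_iff] at hξ ⊢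
    rw [hscale]
    nlinarith [norm_nonneg ξ]
  have key := norm_le_norm_apply_zero_add_norm hψd hψm (z := u / s) (by
    rw [norm_div, norm_real, Real.norm_of_nonneg hs₀.le, div_lt_one hs₀]; exact hu)
  simp only [ψ, mul_zero, mul_div_cancel₀ u (ofReal_ne_zero.2 hs₀.ne'), norm_div, norm_real,
    Real.norm_of_nonneg hM.le, Real.norm_of_nonneg hs₀.le] at key
  calc ‖K u‖ = M * (‖K u‖ / M) := by field_simp
    _ ≤ M * (‖K 0‖ / M + ‖u‖ / s) := by gcongr
    _ = ‖K 0‖ + S / (s * (1 - s ^ 2)) * ‖u‖ := by simp only [M]; field_simp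

/-- For `f = h + conj g` this is `(1 - |z|²) Λ_f(z)`. -/
noncomputable def blochDensity (h g : ℂ → ℂ) (z : ℂ) : ℝ :=
  (1 - ‖z‖ ^ 2) * (‖deriv h z‖ + ‖deriv g z‖)

lemma norm_add_mul_le_of_norm_eq_one {c₁ c₂ : ℂ} (hc₁ : ‖c₁‖ = 1) (hc₂ : ‖c₂‖ = 1) (x y d : ℂ) :
    ‖(c₁ * x + c₂ * y) * d‖ ≤ (‖x‖ + ‖y‖) * ‖d‖ := by
  rw [norm_mul]
  gcongr
  calc ‖c₁ * x + c₂ * y‖ ≤ ‖c₁ * x‖ + ‖c₂ * y‖ := norm_add_le _ _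
    _ = ‖x‖ + ‖y‖ := by rw [norm_mul, norm_mul, hc₁, hc₂, one_mul, one_mul]

theorem blochDensity_le_add_norm_mobius {h g : ℂ → ℂ} {S s : ℝ} {p w : ℂ}
    (hh : DifferentiableOn ℂ h (ball 0 1)) (hg : DifferentiableOn ℂ g (ball 0 1))
    (hS : ∀ z ∈ ball (0 : ℂ) 1, blochDensity h g z ≤ S)
    (hp : ‖p‖ < 1) (hw : ‖w‖ < 1) (hs₀ : 0 < s) (hs₁ : s < 1) (hpw : ‖mobius p w‖ < s) :
    blochDensity h g w ≤ blochDensity h g p + S / (s * (1 - s ^ 2)) * ‖mobius p w‖ := by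
  set u := mobius p w
  have hu : ‖u‖ < 1 := norm_mobius_lt_one hp hw
  have hw' : mobius p u = w := mobius_mobius hp hw
  obtain ⟨c₁, hc₁, hhw⟩ := exists_norm_eq_mul_self (deriv h w)
  obtain ⟨c₂, hc₂, hgw⟩ := exists_norm_eq_mul_self (deriv g w)
  -- `K` is `c₁ h' + c₂ g'` pulled back by the automorphism `mobius p`, which sends `0 ↦ p`, `u ↦ w`.
  set K : ℂ → ℂ := fun ξ ↦
    (c₁ * deriv h (mobius p ξ) + c₂ * deriv g (mobius p ξ)) * mobiusDeriv p ξ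
  have hKd : DifferentiableOn ℂ K (ball 0 1) := by
    have hh' := (hh.analyticOnNhd isOpen_ball).deriv.differentiableOn
    have hg' := (hg.analyticOnNhd isOpen_ball).deriv.differentiableOn
    exact (((hh'.comp (differentiableOn_mobius hp) (mapsTo_mobius hp)).const_mul c₁).add
      ((hg'.comp (differentiableOn_mobius hp) (mapsTo_mobius hp)).const_mul c₂)).mul
      (differentiableOn_mobiusDeriv hp)
  have hKB : ∀ ξ : ℂ, ‖ξ‖ < 1 → ‖K ξ‖ * (1 - ‖ξ‖ ^ 2) ≤ blochDensity h g (mobius p ξ) :=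
    fun ξ hξ ↦
    calc ‖K ξ‖ * (1 - ‖ξ‖ ^ 2)
        ≤ (‖deriv h (mobius p ξ)‖ + ‖deriv g (mobius p ξ)‖) * ‖mobiusDeriv p ξ‖ *
            (1 - ‖ξ‖ ^ 2) := by
          gcongr
          · exact (one_sub_sq_norm_pos hξ).le
          · exact norm_add_mul_le_of_norm_eq_one hc₁ hc₂ _ _ _
      _ = blochDensity h g (mobius p ξ) := by
          rw [blochDensity, mul_assoc, norm_mobiusDeriv_mul hp hξ, mul_comm]
  have hKu : ‖K u‖ * (1 - ‖u‖ ^ 2) = blochDensity h g w := by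
    simp only [K, hw']
    rw [← hhw, ← hgw, ← ofReal_add, norm_mul, norm_real, Real.norm_of_nonneg (by positivity),
      mul_assoc, norm_mobiusDeriv_mul hp hu, hw', blochDensity, mul_comm]
  have hK0 : ‖K 0‖ ≤ blochDensity h g p := by
    simpa [mobius_zero] using hKB 0 (by simp)
  calc blochDensity h g w = ‖K u‖ * (1 - ‖u‖ ^ 2) := hKu.symm
    _ ≤ ‖K u‖ := mul_le_of_le_one_right (norm_nonneg _) (by nlinarith [norm_nonneg u])
    _ ≤ ‖K 0‖ + S / (s * (1 - s ^ 2)) * ‖u‖ :=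
        norm_le_norm_apply_zero_add_of_norm_mul_one_sub_sq_le hKd
          (fun ξ hξ ↦ (hKB ξ (mem_ball_zero_iff.1 hξ)).trans (hS _ (mapsTo_mobius hp hξ)))
          hs₀ hs₁ hpw
    _ ≤ blochDensity h g p + S / (s * (1 - s ^ 2)) * ‖u‖ := by gcongr

lemma blochDensity_comp {h g φ : ℂ → ℂ} {z : ℂ} (hφ : DifferentiableAt ℂ φ z)
    (hh : DifferentiableAt ℂ h (φ z)) (hg : DifferentiableAt ℂ g (φ z)) :
    blochDensity (h ∘ φ) (g ∘ φ) z =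
      (1 - ‖z‖ ^ 2) * ‖deriv φ z‖ * (‖deriv h (φ z)‖ + ‖deriv g (φ z)‖) := by
  rw [blochDensity, deriv_comp z hh hφ, deriv_comp z hg hφ, norm_mul, norm_mul]
  ring

lemma mul_blochDensity_le_blochDensity_comp {h g φ : ℂ → ℂ} {z : ℂ} {ε : ℝ}
    (hφ : DifferentiableAt ℂ φ z) (hh : DifferentiableAt ℂ h (φ z))
    (hg : DifferentiableAt ℂ g (φ z)) (hφz : ‖φ z‖ < 1)
    (hε : ε < (1 - ‖z‖ ^ 2) * ‖deriv φ z‖ / (1 - ‖φ z‖ ^ 2)) :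
    ε * blochDensity h g (φ z) ≤ blochDensity (h ∘ φ) (g ∘ φ) z := by
  rw [blochDensity_comp hφ hh hg, blochDensity, ← mul_assoc]
  exact mul_le_mul_of_nonneg_right ((lt_div_iff₀ (one_sub_sq_norm_pos hφz)).1 hε).le
    (by positivity)

-- `s = √3 / 3` maximizes `s * (1 - s ^ 2)`: this is where the constant `3√3 / 2` comes from.
theorem blochDensity_le_add_of_norm_mobius_lt {h g : ℂ → ℂ} {S : ℝ} {p w : ℂ}
    (hh : DifferentiableOn ℂ h (ball 0 1)) (hg : DifferentiableOn ℂ g (ball 0 1))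
    (hS : ∀ z ∈ ball (0 : ℂ) 1, blochDensity h g z ≤ S)
    (hp : ‖p‖ < 1) (hw : ‖w‖ < 1) (hpw : ‖mobius p w‖ < √3 / 3) :
    blochDensity h g w ≤ blochDensity h g p + 3 * √3 / 2 * S * ‖mobius p w‖ := by
  have h3 : √3 ^ 2 = 3 := Real.sq_sqrt (by norm_num)
  have hC : S / (√3 / 3 * (1 - (√3 / 3) ^ 2)) = 3 * √3 / 2 * S := by
    rw [div_pow, h3]
    field_simp
    linear_combination -2 * S * h3
  have hs₁ : √3 / 3 < 1 := by nlinarith [Real.sqrt_nonneg 3]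
  simpa only [hC] using blochDensity_le_add_norm_mobius hh hg hS hp hw (by positivity) hs₁ hpw

theorem statement12 (φ : ℂ → ℂ)
    (hφa : DifferentiableOn ℂ φ (Metric.ball 0 1))
    (hφm : Set.MapsTo φ (Metric.ball 0 1) (Metric.ball 0 1))
    (r ε : ℝ) (hr : r ∈ Set.Ioo (0 : ℝ) (2 * Real.sqrt 3 / 9)) (hε : 0 < ε)
    (hcover : ∀ w ∈ Metric.ball (0 : ℂ) 1, ∃ z ∈ Metric.ball (0 : ℂ) 1,
      ‖(φ z - w) / (1 - (starRingEnd ℂ) w * φ z)‖ < r ∧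
      (1 - ‖z‖ ^ 2) * ‖deriv φ z‖ / (1 - ‖φ z‖ ^ 2) > ε)
    (h g : ℂ → ℂ)
    (hh : DifferentiableOn ℂ h (Metric.ball 0 1))
    (hg : DifferentiableOn ℂ g (Metric.ball 0 1))
    (S T : ℝ)
    (hS : IsLUB {y : ℝ | ∃ z ∈ Metric.ball (0 : ℂ) 1,
      y = (1 - ‖z‖ ^ 2) *
        (‖deriv h z‖ + ‖deriv g z‖)} S)
    (hT : IsLUB {y : ℝ | ∃ z ∈ Metric.ball (0 : ℂ) 1,
      y = (1 - ‖z‖ ^ 2) *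
        (‖deriv (h ∘ φ) z‖ + ‖deriv (g ∘ φ) z‖)} T) :
    T ≥ (1 - 3 * Real.sqrt 3 / 2 * r) * ε * S := by
  have hB : ∀ z ∈ ball (0 : ℂ) 1, blochDensity h g z ≤ S := fun z hz ↦ hS.1 ⟨z, hz, rfl⟩
  have hS₀ : 0 ≤ S :=
    (mul_nonneg (one_sub_sq_norm_pos (by simp)).le (by positivity)).trans (hB 0 (by simp))
  have hr' : r < √3 / 3 := hr.2.trans (by linarith [Real.sqrt_pos.2 (by norm_num : (0 : ℝ) < 3)])
  have hdiff : ∀ {F : ℂ → ℂ}, DifferentiableOn ℂ F (ball 0 1) → ∀ x ∈ ball (0 : ℂ) 1,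
      DifferentiableAt ℂ F x := fun hF x hx ↦ hF.differentiableAt (isOpen_ball.mem_nhds hx)
  have key : ∀ w ∈ ball (0 : ℂ) 1, ε * blochDensity h g w ≤ T + ε * (3 * √3 / 2 * S * r) := by
    intro w hw
    obtain ⟨z, hz, hρ, hεz⟩ := hcover w hw
    have hp := hφm hz
    rw [← neg_sub, neg_div, norm_neg, ← mobius, norm_mobius_comm] at hρ
    have hlip := blochDensity_le_add_of_norm_mobius_lt hh hg hB (mem_ball_zero_iff.1 hp)
      (mem_ball_zero_iff.1 hw) (hρ.trans hr')
    have hcomp := mul_blochDensity_le_blochDensity_comp (hdiff hφa z hz) (hdiff hh _ hp)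
      (hdiff hg _ hp) (mem_ball_zero_iff.1 hp) hεz
    have hT' : blochDensity (h ∘ φ) (g ∘ φ) z ≤ T := hT.1 ⟨z, hz, rfl⟩
    calc ε * blochDensity h g w
        ≤ ε * blochDensity h g (φ z) + ε * (3 * √3 / 2 * S * ‖mobius (φ z) w‖) := by
          rw [← mul_add]; gcongr
      _ ≤ T + ε * (3 * √3 / 2 * S * r) := by gcongr; exact hcomp.trans hT'
  have hSle : S ≤ (T + ε * (3 * √3 / 2 * S * r)) / ε :=
    hS.2 fun y ⟨w, hw, hy⟩ ↦ hy ▸ (le_div_iff₀' hε).2 (key w hw)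
  rw [le_div_iff₀' hε] at hSle
  linarith
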